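/- Two-phase dissemination bound: in the setting where agent p meets agents q₁, q₂, ..., with knowledge merging at each meeting, if the meeting sequence contains two consecutive blocks each containing every agent of A \ {p} at least once, then after the second block every agent that p met in the second block knows all of A; moreover after one more block all agents know all of A. -/

import Mathlib

/-!
In the first block `p` meets every other agent and absorbs its self-knowledge, so `p` knows all
of `A` at time `t₂`. In the second block every other agent meets `p`, who already knows
everything, and knowledge never shrinks afterwards.
-/

section Gossip

variable {A : Type*} {p : A} {meet : ℕ → A} {K : ℕ → A → Finset A}

lemma knowledge_monotone (hmono : ∀ t : ℕ, ∀ q : A, K t q ⊆ K (t + 1) q) (q : A) :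
    Monotone (K · q) :=
  monotone_nat_of_le_succ fun t => hmono t q

lemma self_mem_knowledge (hK0 : ∀ q : A, q ∈ K 0 q)
    (hmono : ∀ t : ℕ, ∀ q : A, K t q ⊆ K (t + 1) q) (t : ℕ) (q : A) : q ∈ K t q :=
  knowledge_monotone hmono q (Nat.zero_le t) (hK0 q)

lemma mem_knowledge_of_meet [DecidableEq A] (hK0 : ∀ q : A, q ∈ K 0 q)
    (hmono : ∀ t : ℕ, ∀ q : A, K t q ⊆ K (t + 1) q)
    (hmerge : ∀ t : ℕ, K (t + 1) p = K t p ∪ K t (meet t))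
    {t s : ℕ} (hts : t < s) : meet t ∈ K s p := by
  have hmet : meet t ∈ K (t + 1) p :=
    (hmerge t).symm ▸ Finset.mem_union_right _ (self_mem_knowledge hK0 hmono t (meet t))
  exact knowledge_monotone hmono p hts hmet

lemma knowledge_subset_of_meet [DecidableEq A] (hmono : ∀ t : ℕ, ∀ q : A, K t q ⊆ K (t + 1) q)
    (hmerge : ∀ t : ℕ, K (t + 1) (meet t) = K t p ∪ K t (meet t))
    {r t s : ℕ} (hrt : r ≤ t) (hts : t < s) : K r p ⊆ K s (meet t) :=
  calc K r p ⊆ K t p := knowledge_monotone hmono p hrt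
    _ ⊆ K (t + 1) (meet t) := hmerge t ▸ Finset.subset_union_left
    _ ⊆ K s (meet t) := knowledge_monotone hmono (meet t) hts

end Gossip

theorem stmt15_general {A : Type*} [Fintype A] [DecidableEq A]
    (p : A) (meet : ℕ → A) (K : ℕ → A → Finset A)
    (hK0 : ∀ q : A, q ∈ K 0 q)
    (hmono : ∀ t : ℕ, ∀ q : A, K t q ⊆ K (t + 1) q)
    (hmerge : ∀ t : ℕ, K (t + 1) p = K t p ∪ K t (meet t) ∧
      K (t + 1) (meet t) = K t p ∪ K t (meet t))
    (t₁ t₂ t₃ : ℕ) (h23 : t₂ ≤ t₃)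
    (hblock1 : ∀ q : A, q ≠ p → ∃ t, t₁ ≤ t ∧ t < t₂ ∧ meet t = q)
    (hblock2 : ∀ q : A, q ≠ p → ∃ t, t₂ ≤ t ∧ t < t₃ ∧ meet t = q) :
    ∀ q : A, K t₃ q = Finset.univ := by
  have hcollected : K t₂ p = Finset.univ := by
    refine Finset.eq_univ_iff_forall.mpr fun q => ?_
    by_cases hq : q = p
    · exact hq ▸ self_mem_knowledge hK0 hmono t₂ q
    · obtain ⟨t, -, ht, rfl⟩ := hblock1 q hq
      exact mem_knowledge_of_meet hK0 hmono (fun t => (hmerge t).1) ht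
  intro q
  refine Finset.univ_subset_iff.mp (hcollected ▸ ?_)
  by_cases hq : q = p
  · exact hq ▸ knowledge_monotone hmono p h23
  · obtain ⟨t, hlo, hhi, rfl⟩ := hblock2 q hq
    exact knowledge_subset_of_meet hmono (fun t => (hmerge t).2) hlo hhi

/-- Two-phase dissemination bound: if the meeting sequence of `p` contains two
consecutive blocks `[t₁, t₂)` and `[t₂, t₃)`, each containing every other
agent at least once, then by the end of the second block every agent knows all
of `A`. -/
theorem stmt15 {A : Type*} [Fintype A] [DecidableEq A]
    (p : A) (meet : ℕ → A) (K : ℕ → A → Finset A)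
    (hK0 : ∀ q : A, q ∈ K 0 q)
    (hmono : ∀ t : ℕ, ∀ q : A, K t q ⊆ K (t + 1) q)
    (hmerge : ∀ t : ℕ, K (t + 1) p = K t p ∪ K t (meet t) ∧
      K (t + 1) (meet t) = K t p ∪ K t (meet t))
    (t₁ t₂ t₃ : ℕ) (h12 : t₁ ≤ t₂) (h23 : t₂ ≤ t₃)
    (hblock1 : ∀ q : A, q ≠ p → ∃ t, t₁ ≤ t ∧ t < t₂ ∧ meet t = q)
    (hblock2 : ∀ q : A, q ≠ p → ∃ t, t₂ ≤ t ∧ t < t₃ ∧ meet t = q) :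
    ∀ q : A, K t₃ q = Finset.univ :=
  stmt15_general p meet K hK0 hmono hmerge t₁ t₂ t₃ h23 hblock1 hblock2
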